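/- arXiv:2409.19610 — 2 statements merged into one kernel-verified Lean document; each statement's English description precedes it below -/
import Mathlib

section
/- Let μ, μ̄, σ, σ̄ > 0 and ρ ∈ [0, 1), set a := μ/μ̄ and b := σ/σ̄, and assume (a + b²) − ρb(a + 1) ≠ 0. Define f(θ) := (θμ + (1−θ)μ̄)² / (θ²σ² + 2ρθ(1−θ)σσ̄ + (1−θ)²σ̄²) and θ* := (a − ρb)/((a + b²) − ρb(a + 1)). Then the denominator θ²σ² + 2ρθ(1−θ)σσ̄ + (1−θ)²σ̄² is strictly positive for every θ ∈ ℝ, f is differentiable at θ*, and f′(θ*) = 0. -/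
/-!
Write `m θ` for the mean and `v θ` for the variance of the mixture, so `f = m² / v` and
`f' = m (2 m' v - m v') / v²`. Since `m` is affine and `v` quadratic, `2 m' v - m v'` is affine
in `θ`: it equals `2 (P - Q θ)` with `P = μ σ̄² - ρ σ σ̄ μ̄` and
`Q = μ σ̄² + μ̄ σ² - ρ σ σ̄ (μ + μ̄)`. Its unique root `P / Q` is the paper's `θ*` with
numerator and denominator multiplied by `μ̄ σ̄²`.
The variance is positive because it is `(θσ + ρ(1-θ)σ̄)² + (1-ρ²)((1-θ)σ̄)²`.
-/

theorem HasDerivAt.sq_div_eq_zero {𝕜 : Type*} [NontriviallyNormedField 𝕜] {m v : 𝕜 → 𝕜}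
    {m' v' x : 𝕜} (hm : HasDerivAt m m' x) (hv : HasDerivAt v v' x) (hvx : v x ≠ 0)
    (hstat : 2 * m' * v x = m x * v') :
    HasDerivAt (fun y => m y ^ 2 / v y) 0 x := by
  refine ((hm.pow 2).div hv hvx).congr_deriv ?_
  rw [div_eq_zero_iff, Pi.pow_apply]
  left
  push_cast
  linear_combination m x * hstat

namespace PromptFolio

variable (μ μbar σ σbar ρ : ℝ)

def mixtureMean (θ : ℝ) : ℝ := θ * μ + (1 - θ) * μbar

def mixtureVariance (θ : ℝ) : ℝ :=
  θ ^ 2 * σ ^ 2 + 2 * ρ * θ * (1 - θ) * σ * σbar + (1 - θ) ^ 2 * σbar ^ 2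

def optimalMixingNum : ℝ := μ * σbar ^ 2 - ρ * σ * σbar * μbar

def optimalMixingDen : ℝ := μ * σbar ^ 2 + μbar * σ ^ 2 - ρ * σ * σbar * (μ + μbar)

noncomputable def optimalMixing : ℝ :=
  optimalMixingNum μ μbar σ σbar ρ / optimalMixingDen μ μbar σ σbar ρ

theorem hasDerivAt_mixtureMean (θ : ℝ) : HasDerivAt (mixtureMean μ μbar) (μ - μbar) θ := by
  refine (((hasDerivAt_id θ).mul_const μ).add
    (((hasDerivAt_const θ 1).sub (hasDerivAt_id θ)).mul_const μbar)).congr_deriv ?_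
  ring

theorem hasDerivAt_mixtureVariance (θ : ℝ) :
    HasDerivAt (mixtureVariance σ σbar ρ)
      (2 * θ * σ ^ 2 + 2 * ρ * (1 - 2 * θ) * σ * σbar - 2 * (1 - θ) * σbar ^ 2) θ := by
  have hlin := (hasDerivAt_const θ (1 : ℝ)).sub (hasDerivAt_id θ)
  refine ((((hasDerivAt_pow 2 θ).mul_const (σ ^ 2)).add
    (((((hasDerivAt_id θ).const_mul (2 * ρ)).mul hlin).mul_const σ).mul_const σbar)).add
    ((hlin.pow 2).mul_const (σbar ^ 2))).congr_deriv ?_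
  simp only [Pi.sub_apply, id, Nat.cast_ofNat]
  ring

theorem mixtureVariance_eq_sq_add (θ : ℝ) :
    mixtureVariance σ σbar ρ θ
      = (θ * σ + ρ * (1 - θ) * σbar) ^ 2 + (1 - ρ ^ 2) * ((1 - θ) * σbar) ^ 2 := by
  unfold mixtureVariance; ring

variable {σ σbar ρ} in
theorem mixtureVariance_pos (hσ : σ ≠ 0) (hσbar : σbar ≠ 0) (hρ : ρ ^ 2 < 1) (θ : ℝ) :
    0 < mixtureVariance σ σbar ρ θ := by
  rw [mixtureVariance_eq_sq_add]
  rcases eq_or_ne θ 1 with rfl | hθ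
  · simp only [sub_self, zero_mul, mul_zero, add_zero, one_mul]
    positivity
  · have : 0 < (1 - ρ ^ 2) * ((1 - θ) * σbar) ^ 2 :=
      mul_pos (sub_pos.2 hρ) (by have := sub_ne_zero.2 hθ.symm; positivity)
    positivity

theorem two_mul_deriv_mean_mul_variance_sub (θ : ℝ) :
    2 * (μ - μbar) * mixtureVariance σ σbar ρ θ - mixtureMean μ μbar θ *
        (2 * θ * σ ^ 2 + 2 * ρ * (1 - 2 * θ) * σ * σbar - 2 * (1 - θ) * σbar ^ 2)
      = 2 * (optimalMixingNum μ μbar σ σbar ρ - optimalMixingDen μ μbar σ σbar ρ * θ) := by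
  unfold mixtureVariance mixtureMean optimalMixingNum optimalMixingDen; ring

variable {μ μbar σ σbar ρ} in
theorem hasDerivAt_mixture_snr_optimalMixing (hQ : optimalMixingDen μ μbar σ σbar ρ ≠ 0)
    (hv : mixtureVariance σ σbar ρ (optimalMixing μ μbar σ σbar ρ) ≠ 0) :
    HasDerivAt (fun θ => mixtureMean μ μbar θ ^ 2 / mixtureVariance σ σbar ρ θ) 0
      (optimalMixing μ μbar σ σbar ρ) := by
  refine (hasDerivAt_mixtureMean μ μbar _).sq_div_eq_zero
    (hasDerivAt_mixtureVariance σ σbar ρ _) hv ?_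
  rw [← sub_eq_zero, two_mul_deriv_mean_mul_variance_sub, optimalMixing, mul_div_cancel₀ _ hQ,
    sub_self, mul_zero]

variable {μbar σbar}

theorem ratio_form_num_eq (hμbar : μbar ≠ 0) (hσbar : σbar ≠ 0) :
    μ / μbar - ρ * (σ / σbar) = optimalMixingNum μ μbar σ σbar ρ / (μbar * σbar ^ 2) := by
  unfold optimalMixingNum; field_simp

theorem ratio_form_den_eq (hμbar : μbar ≠ 0) (hσbar : σbar ≠ 0) :
    (μ / μbar + (σ / σbar) ^ 2) - ρ * (σ / σbar) * (μ / μbar + 1)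
      = optimalMixingDen μ μbar σ σbar ρ / (μbar * σbar ^ 2) := by
  unfold optimalMixingDen; field_simp

theorem ratio_form_eq_optimalMixing (hμbar : μbar ≠ 0) (hσbar : σbar ≠ 0) :
    (μ / μbar - ρ * (σ / σbar)) / ((μ / μbar + (σ / σbar) ^ 2) - ρ * (σ / σbar) * (μ / μbar + 1))
      = optimalMixing μ μbar σ σbar ρ := by
  rw [ratio_form_num_eq μ σ ρ hμbar hσbar, ratio_form_den_eq μ σ ρ hμbar hσbar,
    div_div_div_cancel_right₀ (by positivity), optimalMixing]

end PromptFolio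

open PromptFolio in
theorem optimal_mixing_first_order_general
    (μ μbar σ σbar ρ : ℝ) (hμbar : 0 < μbar)
    (hσ : 0 < σ) (hσbar : 0 < σbar) (hρ0 : 0 ≤ ρ) (hρ1 : ρ < 1)
    (a b : ℝ) (ha : a = μ / μbar) (hb : b = σ / σbar)
    (hden : (a + b ^ 2) - ρ * b * (a + 1) ≠ 0)
    (f : ℝ → ℝ)
    (hf : f = fun θ => (θ * μ + (1 - θ) * μbar) ^ 2 /
      (θ ^ 2 * σ ^ 2 + 2 * ρ * θ * (1 - θ) * σ * σbar + (1 - θ) ^ 2 * σbar ^ 2))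
    (θstar : ℝ)
    (hθstar : θstar = (a - ρ * b) / ((a + b ^ 2) - ρ * b * (a + 1))) :
    (∀ θ : ℝ, 0 < θ ^ 2 * σ ^ 2 + 2 * ρ * θ * (1 - θ) * σ * σbar
        + (1 - θ) ^ 2 * σbar ^ 2)
    ∧ DifferentiableAt ℝ f θstar
    ∧ deriv f θstar = 0 := by
  subst ha hb hf hθstar
  have hvar := mixtureVariance_pos (ρ := ρ) hσ.ne' hσbar.ne' (by nlinarith)
  rw [ratio_form_den_eq μ σ ρ hμbar.ne' hσbar.ne'] at hden
  have hQ : optimalMixingDen μ μbar σ σbar ρ ≠ 0 := fun h => hden (by rw [h, zero_div])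
  have hF := hasDerivAt_mixture_snr_optimalMixing hQ (hvar _).ne'
  rw [ratio_form_eq_optimalMixing μ σ ρ hμbar.ne' hσbar.ne']
  exact ⟨hvar, hF.differentiableAt, hF.deriv⟩

theorem optimal_mixing_first_order
    (μ μbar σ σbar ρ : ℝ) (hμ : 0 < μ) (hμbar : 0 < μbar)
    (hσ : 0 < σ) (hσbar : 0 < σbar) (hρ0 : 0 ≤ ρ) (hρ1 : ρ < 1)
    (a b : ℝ) (ha : a = μ / μbar) (hb : b = σ / σbar)
    (hden : (a + b ^ 2) - ρ * b * (a + 1) ≠ 0)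
    (f : ℝ → ℝ)
    (hf : f = fun θ => (θ * μ + (1 - θ) * μbar) ^ 2 /
      (θ ^ 2 * σ ^ 2 + 2 * ρ * θ * (1 - θ) * σ * σbar + (1 - θ) ^ 2 * σbar ^ 2))
    (θstar : ℝ)
    (hθstar : θstar = (a - ρ * b) / ((a + b ^ 2) - ρ * b * (a + 1))) :
    (∀ θ : ℝ, 0 < θ ^ 2 * σ ^ 2 + 2 * ρ * θ * (1 - θ) * σ * σbar
        + (1 - θ) ^ 2 * σbar ^ 2)
    ∧ DifferentiableAt ℝ f θstar
    ∧ deriv f θstar = 0 :=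
  optimal_mixing_first_order_general μ μbar σ σbar ρ hμbar hσ hσbar hρ0 hρ1 a b ha hb hden f hf
    θstar hθstar
end

section
/- Let μ, μ̄, σ, σ̄ > 0 and ρ ∈ [0, 1), set a := μ/μ̄ and b := σ/σ̄, define f(θ) := (θμ + (1−θ)μ̄)² / (θ²σ² + 2ρθ(1−θ)σσ̄ + (1−θ)²σ̄²) and θ* := (a − ρb)/((a + b²) − ρb(a + 1)), and assume (a + b²) − ρb(a + 1) ≠ 0 and θ* ∈ [0, 1]. Then f(θ) ≤ f(θ*) for every θ ∈ [0, 1]; that is, θ* is the optimal mixing coefficient maximizing the squared mean-to-standard-deviation ratio of the mixture over [0, 1]. -/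
set_option maxHeartbeats 1000000 in
theorem optimal_mixing_coefficient
    (μ μbar σ σbar ρ : ℝ) (hμ : 0 < μ) (hμbar : 0 < μbar)
    (hσ : 0 < σ) (hσbar : 0 < σbar) (hρ0 : 0 ≤ ρ) (hρ1 : ρ < 1)
    (a b : ℝ) (ha : a = μ / μbar) (hb : b = σ / σbar)
    (f : ℝ → ℝ)
    (hf : f = fun θ => (θ * μ + (1 - θ) * μbar) ^ 2 /
      (θ ^ 2 * σ ^ 2 + 2 * ρ * θ * (1 - θ) * σ * σbar + (1 - θ) ^ 2 * σbar ^ 2))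
    (θstar : ℝ)
    (hθstar : θstar = (a - ρ * b) / ((a + b ^ 2) - ρ * b * (a + 1)))
    (hden : (a + b ^ 2) - ρ * b * (a + 1) ≠ 0)
    (hθ0 : 0 ≤ θstar) (hθ1 : θstar ≤ 1) :
    ∀ θ : ℝ, 0 ≤ θ → θ ≤ 1 → f θ ≤ f θstar := by
  subst ha hb hf
  intro θ hθ hθ'
  simp only
  -- abbreviations
  set P : ℝ := μ * σbar ^ 2 - ρ * σ * σbar * μbar with hP
  set E : ℝ := μ * σbar ^ 2 + μbar * σ ^ 2 - ρ * σ * σbar * (μ + μbar) with hE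
  have hμb' := hμbar.ne'
  have hσb' := hσbar.ne'
  have hd2 : (μ / μbar + (σ / σbar) ^ 2) - ρ * (σ / σbar) * (μ / μbar + 1)
      = E / (μbar * σbar ^ 2) := by
    field_simp [hE]
    ring
  have hEne : E ≠ 0 := by
    intro h
    apply hden
    rw [hd2, h, zero_div]
  have hts : θstar * E = P := by
    rw [hθstar, hd2]
    have hn2 : μ / μbar - ρ * (σ / σbar) = P / (μbar * σbar ^ 2) := by
      field_simp [hP]; ring
    rw [hn2]
    field_simp
  -- positivity of the denominator quadratic on [0,1]
  have hD : ∀ t : ℝ, 0 ≤ t → t ≤ 1 →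
      0 < t ^ 2 * σ ^ 2 + 2 * ρ * t * (1 - t) * σ * σbar + (1 - t) ^ 2 * σbar ^ 2 := by
    intro t ht ht'
    have h1 : 0 ≤ 2 * ρ * t * (1 - t) * σ * σbar := by
      have := mul_nonneg (mul_nonneg (mul_nonneg (mul_nonneg
        (by linarith : (0:ℝ) ≤ 2 * ρ) ht) (by linarith : (0:ℝ) ≤ 1 - t)) hσ.le) hσbar.le
      linarith [this]
    have h2 : 0 < t * σ + (1 - t) * σbar := by
      rcases le_total σ σbar with h | h <;> nlinarith
    nlinarith [sq_nonneg (t * σ - (1 - t) * σbar), sq_nonneg (t * σ + (1 - t) * σbar)]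
  have hDθ := hD θ hθ hθ'
  have hDs := hD θstar hθ0 hθ1
  rw [div_le_div_iff₀ hDθ hDs]
  -- certificate quantities
  set K : ℝ := μ ^ 2 * σbar ^ 2 - 2 * ρ * μ * μbar * σ * σbar + μbar ^ 2 * σ ^ 2 with hK
  have hKpos : 0 < K := by
    nlinarith [sq_nonneg (μ * σbar - μbar * σ), mul_pos (mul_pos hμ hμbar) (mul_pos hσ hσbar)]
  set Qθ : ℝ := θ * (σ * (σ * μbar - ρ * σbar * μ)) - (1 - θ) * (σbar * (σbar * μ - ρ * σ * μbar))
    with hQθ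
  set Qs : ℝ := θstar * (σ * (σ * μbar - ρ * σbar * μ))
      - (1 - θstar) * (σbar * (σbar * μ - ρ * σ * μbar)) with hQs
  have hQsE : Qs * E = 0 := by
    rw [hQs]
    linear_combination (σ * (σ * μbar - ρ * σbar * μ) + σbar * (σbar * μ - ρ * σ * μbar)) * hts
  have hQs0 : Qs = 0 := by
    rcases mul_eq_zero.mp hQsE with h | h
    · exact h
    · exact absurd h hEne
  set Nθ : ℝ := θ * μ + (1 - θ) * μbar with hNθ
  set Ns : ℝ := θstar * μ + (1 - θstar) * μbar with hNs
  set Dθ : ℝ := θ ^ 2 * σ ^ 2 + 2 * ρ * θ * (1 - θ) * σ * σbar + (1 - θ) ^ 2 * σbar ^ 2 with hDθdef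
  set Ds : ℝ := θstar ^ 2 * σ ^ 2 + 2 * ρ * θstar * (1 - θstar) * σ * σbar
      + (1 - θstar) ^ 2 * σbar ^ 2 with hDsdef
  -- key identities
  have hidθ : Dθ * K = (1 - ρ ^ 2) * Nθ ^ 2 * σ ^ 2 * σbar ^ 2 + Qθ ^ 2 := by
    rw [hDθdef, hK, hNθ, hQθ]; ring
  have hids : Ds * K = (1 - ρ ^ 2) * Ns ^ 2 * σ ^ 2 * σbar ^ 2 + Qs ^ 2 := by
    rw [hDsdef, hK, hNs, hQs]; ring
  have hids' : Ds * K = (1 - ρ ^ 2) * Ns ^ 2 * σ ^ 2 * σbar ^ 2 := by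
    rw [hids, hQs0]; ring
  have hfinal : K * (Ns ^ 2 * Dθ - Nθ ^ 2 * Ds) = Ns ^ 2 * Qθ ^ 2 := by
    linear_combination Ns ^ 2 * hidθ - Nθ ^ 2 * hids'
  nlinarith [hKpos, hfinal, mul_nonneg (sq_nonneg Ns) (sq_nonneg Qθ)]
end
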